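/- Let n ≥ 2 and c, d ∈ ℂ^×. Then for every x = (x_2,…,x_{2n−1}) ∈ (ℂ^×)^{2n−2} for which all denominators occurring are nonzero, e_0^c(e_n^{cd}(e_0^d(x))) = e_n^d(e_0^{cd}(e_n^c(x))); that is, the Verma relation e_0^{c} e_n^{cd} e_0^{d} = e_n^{d} e_0^{cd} e_n^{c} holds between the rational maps e_0 and e_n. -/

import Mathlib

noncomputable section

/-- `Sf n x k = ∑_{j=2}^{k} x_j / x_{n+j-1}` (so `Sf n x 1 = 0`, `S(x) = Sf n x n`). -/
def Sf (n : ℕ) (x : ℕ → ℂ) (k : ℕ) : ℂ :=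
  ∑ j ∈ Finset.Icc 2 k, x j / x (n + j - 1)

/-- `Tf n x k = ∑_{j=k+1}^{n} x_j / x_{n+j-1}` (so `Tf n x n = 0`). -/
def Tf (n : ℕ) (x : ℕ → ℂ) (k : ℕ) : ℂ :=
  ∑ j ∈ Finset.Icc (k + 1) n, x j / x (n + j - 1)

/-- The rational map `e_0^c`. -/
def e0M (n : ℕ) (c : ℂ) (x : ℕ → ℂ) (k : ℕ) : ℂ :=
  if k ≤ n - 1 then x k * Sf n x n / (c * Sf n x k + Tf n x k)
  else if k ≤ n + 1 then x k / c
  else x k * (c * Sf n x (k - n) + Tf n x (k - n)) / (c * Sf n x n)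

/-- The rational map `e_n^c`: multiply the coordinate `x_n` by `c`. -/
def enM (n : ℕ) (c : ℂ) (x : ℕ → ℂ) (k : ℕ) : ℂ :=
  if k = n then c * x k else x k

/-- All coordinates in range are nonzero. -/
def Nz (n : ℕ) (z : ℕ → ℂ) : Prop := ∀ k, 2 ≤ k → k ≤ 2 * n - 1 → z k ≠ 0

/-- Denominators appearing in `e_0^c` at the point `z` are nonzero. -/
def Dom0 (n : ℕ) (c : ℂ) (z : ℕ → ℂ) : Prop :=
  Sf n z n ≠ 0 ∧ ∀ k, 2 ≤ k → k ≤ n - 1 → c * Sf n z k + Tf n z k ≠ 0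

/-! With `F^c_k = (c S_k + T_k) / S`, the map `e_0^c` only rescales coordinates by `F^c_k` or its
inverse (up to `c`), so away from the coordinate `x_n` the relation reduces to the multiplicativity
`F^d_k(x) · F^c_k(e_n^{cd} e_0^d x) = F^{cd}_k(e_n^c x)` for `1 ≤ k ≤ n - 1`. That is a rational
identity in `S_k`, `S_{n-1}`, `S` once the partial sums of the image points are known: `e_n^c`
fixes `S_k` for `k < n` and replaces `S` by `S_{n-1} + c (S - S_{n-1})`, and `e_0^c` sends `S_k`
to `c S_k / F^c_k`. The latter telescopes, since `e_0^c` multiplies `x_{k+1} / x_{n+k}` by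
`c / (F^c_k F^c_{k+1})` while `F^c_{k+1} - F^c_k = (c - 1) x_{k+1} / (x_{n+k} S)`. -/

/-- `e_0^c` multiplies `x_k` by `1 / e0Factor n c x k` for `2 ≤ k ≤ n` and `x_{n+l}` by
`e0Factor n c x l / c` for `1 ≤ l ≤ n - 1`. -/
def e0Factor (n : ℕ) (c : ℂ) (x : ℕ → ℂ) (k : ℕ) : ℂ :=
  (c * Sf n x k + Tf n x k) / Sf n x n

section

variable {n : ℕ} {c d : ℂ} {x : ℕ → ℂ}

lemma Sf_succ {k : ℕ} (hk : 1 ≤ k) : Sf n x (k + 1) = Sf n x k + x (k + 1) / x (n + k) := by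
  rw [Sf, Finset.sum_Icc_succ_top (by omega), show n + (k + 1) - 1 = n + k by omega, Sf]

lemma Sf_one : Sf n x 1 = 0 := by
  simp [Sf]

lemma Sf_add_Tf {k : ℕ} (hk : 1 ≤ k) (hkn : k ≤ n) : Sf n x k + Tf n x k = Sf n x n := by
  simp only [Sf, Tf, show (2 : ℕ) = 1 + 1 from rfl, Finset.Icc_add_one_left_eq_Ioc]
  exact Finset.sum_Ioc_consecutive _ hk hkn

lemma Tf_self : Tf n x n = 0 := by
  simp [Tf]

lemma e0Factor_eq {k : ℕ} (hk : 1 ≤ k) (hkn : k ≤ n) :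
    e0Factor n c x k = (Sf n x n + (c - 1) * Sf n x k) / Sf n x n := by
  rw [e0Factor, ← Sf_add_Tf hk hkn]
  ring

lemma e0Factor_self (hS : Sf n x n ≠ 0) : e0Factor n c x n = c := by
  rw [e0Factor, Tf_self, add_zero, mul_div_cancel_right₀ _ hS]

lemma e0Factor_ne_zero (hc : c ≠ 0) (hx : Dom0 n c x) {k : ℕ} (hk : 1 ≤ k) (hkn : k ≤ n) :
    e0Factor n c x k ≠ 0 := by
  obtain rfl | hk := eq_or_lt_of_le hk
  · simp [e0Factor_eq le_rfl hkn, Sf_one, hx.1]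
  obtain rfl | hkn := eq_or_lt_of_le hkn
  · rwa [e0Factor_self hx.1]
  exact div_ne_zero (hx.2 k hk (by omega)) hx.1

lemma enM_apply_self : enM n c x n = c * x n := if_pos rfl

lemma enM_apply_of_ne {k : ℕ} (hk : k ≠ n) : enM n c x k = x k := if_neg hk

lemma e0M_apply_self (hn : 1 ≤ n) : e0M n c x n = x n / c := by
  rw [e0M, if_neg (by omega), if_pos (by omega)]

lemma e0M_apply_of_le {k : ℕ} (hS : Sf n x n ≠ 0) (hk : 1 ≤ k) (hkn : k ≤ n) :
    e0M n c x k = x k / e0Factor n c x k := by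
  obtain rfl | hkn := eq_or_lt_of_le hkn
  · rw [e0M_apply_self (by omega), e0Factor_self hS]
  · rw [e0M, if_pos (by omega), e0Factor, div_div_eq_mul_div]

lemma e0M_apply_add {l : ℕ} (hS : Sf n x n ≠ 0) (hl : 1 ≤ l) (hln : l ≤ n - 1) :
    e0M n c x (n + l) = x (n + l) * e0Factor n c x l / c := by
  rw [e0M, if_neg (by omega)]
  obtain rfl | hl := eq_or_lt_of_le hl
  · rw [if_pos (by omega), e0Factor_eq le_rfl (by omega), Sf_one, mul_zero, add_zero,
      div_self hS, mul_one]
  · rw [if_neg (by omega), Nat.add_sub_cancel_left, e0Factor, mul_comm c (Sf n x n), ← div_div,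
      mul_div_assoc]

lemma Sf_e0M (hc : c ≠ 0) (hx : Dom0 n c x) {k : ℕ} (hk : 1 ≤ k) (hkn : k ≤ n) :
    Sf n (e0M n c x) k = c * Sf n x k / e0Factor n c x k := by
  induction k, hk using Nat.le_induction with
  | base => simp [Sf_one]
  | succ k hk ih =>
    have hF := e0Factor_ne_zero hc hx hk (by omega)
    have hF' := e0Factor_ne_zero hc hx (by omega) hkn
    have hS := hx.1
    have hratio : ∀ a b F F' : ℂ, a / F' / (b * F / c) = c * (a / b) / (F' * F) := by
      intros; simp only [div_eq_mul_inv, mul_inv, inv_inv]; ring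
    rw [Sf_succ hk, ih (by omega), e0M_apply_of_le hS (by omega) hkn,
      e0M_apply_add hS hk (by omega), hratio, Sf_succ hk]
    have hstep : e0Factor n c x (k + 1)
        = e0Factor n c x k + (c - 1) * (x (k + 1) / x (n + k)) / Sf n x n := by
      rw [e0Factor_eq hk (by omega), e0Factor_eq (by omega) hkn, Sf_succ hk]; ring
    have hbase : e0Factor n c x k = 1 + (c - 1) * Sf n x k / Sf n x n := by
      rw [e0Factor_eq hk (by omega)]; field_simp
    field_simp
    linear_combination Sf n x k * hstep - x (k + 1) / x (n + k) * hbase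

lemma Sf_e0M_self (hn : 1 ≤ n) (hc : c ≠ 0) (hx : Dom0 n c x) :
    Sf n (e0M n c x) n = Sf n x n := by
  rw [Sf_e0M hc hx hn le_rfl, e0Factor_self hx.1, mul_div_cancel_left₀ _ hc]

lemma Sf_enM_of_le_pred {k : ℕ} (hk : k ≤ n - 1) : Sf n (enM n c x) k = Sf n x k :=
  Finset.sum_congr rfl fun j hj => by
    rw [Finset.mem_Icc] at hj
    rw [enM_apply_of_ne (by omega), enM_apply_of_ne (by omega)]

lemma Sf_enM_self (hn : 2 ≤ n) :
    Sf n (enM n c x) n = Sf n x (n - 1) + c * (Sf n x n - Sf n x (n - 1)) := by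
  have hsucc (y : ℕ → ℂ) : Sf n y n = Sf n y (n - 1) + y n / y (2 * n - 1) := by
    have h := Sf_succ (n := n) (x := y) (k := n - 1) (by omega)
    rwa [Nat.sub_add_cancel (by omega), show n + (n - 1) = 2 * n - 1 by omega] at h
  rw [hsucc, hsucc x, Sf_enM_of_le_pred le_rfl, enM_apply_self, enM_apply_of_ne (by omega)]
  ring

lemma Sf_enM_e0M_self (hn : 2 ≤ n) (hd : d ≠ 0) (hx : Dom0 n d x) :
    Sf n (enM n (c * d) (e0M n d x)) n = d * Sf n (enM n c x) n / e0Factor n d x (n - 1) := by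
  have hG := e0Factor_ne_zero hd hx (k := n - 1) (by omega) (by omega)
  have hGS : e0Factor n d x (n - 1) * Sf n x n = Sf n x n + (d - 1) * Sf n x (n - 1) := by
    rw [e0Factor_eq (by omega) (by omega), div_mul_cancel₀ _ hx.1]
  rw [Sf_enM_self hn, Sf_enM_self hn, Sf_e0M hd hx (by omega) (by omega),
    Sf_e0M_self (by omega) hd hx]
  field_simp
  linear_combination c * hGS

lemma Sf_enM_e0M_self_ne_zero (hn : 2 ≤ n) (hd : d ≠ 0) (hx : Dom0 n d x)
    (hu : Sf n (enM n c x) n ≠ 0) : Sf n (enM n (c * d) (e0M n d x)) n ≠ 0 := by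
  rw [Sf_enM_e0M_self hn hd hx]
  exact div_ne_zero (mul_ne_zero hd hu) (e0Factor_ne_zero hd hx (by omega) (by omega))

lemma e0Factor_mul_e0Factor_enM_e0M (hn : 2 ≤ n) (hd : d ≠ 0) (hx : Dom0 n d x)
    (hu : Sf n (enM n c x) n ≠ 0) {k : ℕ} (hk : 1 ≤ k) (hkn : k ≤ n - 1) :
    e0Factor n d x k * e0Factor n c (enM n (c * d) (e0M n d x)) k
      = e0Factor n (c * d) (enM n c x) k := by
  have hS := hx.1
  have hF := e0Factor_ne_zero hd hx hk (by omega)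
  have hG := e0Factor_ne_zero hd hx (k := n - 1) (by omega) (by omega)
  have hz := Sf_enM_e0M_self_ne_zero hn hd hx hu
  rw [e0Factor_eq (x := enM n (c * d) (e0M n d x)) hk (by omega),
    e0Factor_eq (x := enM n c x) hk (by omega), Sf_enM_of_le_pred hkn, Sf_enM_of_le_pred hkn,
    Sf_e0M hd hx hk (by omega), Sf_enM_e0M_self hn hd hx]
  field_simp
  rw [e0Factor_eq hk (by omega), e0Factor_eq (by omega) (by omega), Sf_enM_self hn]
  field_simp
  ring

end

theorem stmt11_general (n : ℕ) (hn : 2 ≤ n) (c d : ℂ) (hc : c ≠ 0) (hd : d ≠ 0)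
    (x : ℕ → ℂ)
    (h1 : Dom0 n d x)
    (h6 : Dom0 n (c * d) (enM n c x)) :
    ∀ k, 2 ≤ k → k ≤ 2 * n - 1 →
      e0M n c (enM n (c * d) (e0M n d x)) k
        = enM n d (e0M n (c * d) (enM n c x)) k := by
  intro k hk2 hk
  have hz := Sf_enM_e0M_self_ne_zero hn hd h1 h6.1
  rcases lt_trichotomy k n with hlt | rfl | hgt
  · rw [e0M_apply_of_le hz (by omega) hlt.le, enM_apply_of_ne hlt.ne,
      e0M_apply_of_le h1.1 (by omega) hlt.le, enM_apply_of_ne hlt.ne,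
      e0M_apply_of_le h6.1 (by omega) hlt.le, enM_apply_of_ne hlt.ne, div_div,
      e0Factor_mul_e0Factor_enM_e0M hn hd h1 h6.1 (by omega) (by omega)]
  · simp only [e0M_apply_self (by omega : 1 ≤ k), enM_apply_self]
    field_simp
  · obtain ⟨l, rfl⟩ : ∃ l, k = n + l := ⟨k - n, by omega⟩
    have hl : n + l ≠ n := by omega
    rw [e0M_apply_add hz (by omega) (by omega), enM_apply_of_ne hl,
      e0M_apply_add h1.1 (by omega) (by omega), enM_apply_of_ne hl,
      e0M_apply_add h6.1 (by omega) (by omega), enM_apply_of_ne hl,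
      ← e0Factor_mul_e0Factor_enM_e0M hn hd h1 h6.1 (by omega) (by omega)]
    field_simp

/-- the Verma relation `e_0^c e_n^{cd} e_0^d = e_n^d e_0^{cd} e_n^c`. -/
theorem stmt11 (n : ℕ) (hn : 2 ≤ n) (c d : ℂ) (hc : c ≠ 0) (hd : d ≠ 0)
    (x : ℕ → ℂ) (hx : Nz n x)
    (h1 : Dom0 n d x) (h2 : Nz n (e0M n d x))
    (h3 : Nz n (enM n (c * d) (e0M n d x)))
    (h4 : Dom0 n c (enM n (c * d) (e0M n d x)))
    (h5 : Nz n (enM n c x)) (h6 : Dom0 n (c * d) (enM n c x))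
    (h7 : Nz n (e0M n (c * d) (enM n c x))) :
    ∀ k, 2 ≤ k → k ≤ 2 * n - 1 →
      e0M n c (enM n (c * d) (e0M n d x)) k
        = enM n d (e0M n (c * d) (enM n c x)) k :=
  stmt11_general n hn c d hc hd x h1 h6
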